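/- arXiv:math/0506335 — 4 statements merged into one kernel-verified Lean document; each statement's English description precedes it below -/
import Mathlib

section
/- For a doubly infinite sequence a = (a_i)_{i∈ℤ} of elements of a commutative ring and variables x_1,...,x_p, the factorial complete homogeneous functions satisfy h_{i+1}(x | τ^{-1}a) = h_{i+1}(x | a) + (a_{i+p} − a_0) · h_i(x | a), where (τ^s a)_n = a_{n+s}. -/
open Finset
open scoped Classical

noncomputable section

variable {R : Type*} [CommRing R]

/-- shifted sequence: `(τ^s a)_n = a_{n+s}` -/
def shiftSeq (a : ℤ → R) (s : ℤ) : ℤ → R := fun n => a (n + s)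

/-- factorial complete homogeneous function `h_k(x|a)`
    (`= Σ_{1≤i_1≤...≤i_k≤p} ∏_r (x_{i_r} - a_{i_r + r - 1})`, `0` for `k < 0`) -/
def fh (p : ℕ) (x : Fin p → R) (a : ℤ → R) (k : ℤ) : R :=
  if 0 ≤ k then
    ∑ f ∈ Finset.univ.filter (fun f : Fin k.toNat → Fin p => Monotone f),
      ∏ r : Fin k.toNat, (x (f r) - a (((f r : ℕ) : ℤ) + ((r : ℕ) : ℤ) + 1))
  else 0

/-- factorial elementary function `e_k(x|a)`
    (`= Σ_{1≤i_1<...<i_k≤p} ∏_r (x_{i_r} - a_{i_r - r + 1})`, `0` for `k < 0`;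
    it vanishes automatically for `k > p`) -/
def fe (p : ℕ) (x : Fin p → R) (a : ℤ → R) (k : ℤ) : R :=
  if 0 ≤ k then
    ∑ f ∈ Finset.univ.filter (fun f : Fin k.toNat → Fin p => StrictMono f),
      ∏ r : Fin k.toNat, (x (f r) - a (((f r : ℕ) : ℤ) - ((r : ℕ) : ℤ) + 1))
  else 0

/-- generalized factorial power `(y|a)^k = (y - a_1)⋯(y - a_k)` -/
def gfp (y : R) (a : ℤ → R) (k : ℕ) : R :=
  ∏ i ∈ Finset.range k, (y - a ((i : ℤ) + 1))

/-- the factorial Schur polynomial `s_λ(x|a)`, defined through the factorial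
    Jacobi-Trudi determinant `det( h_{λ_i - i + j}(x | τ^{1-j} a) )_{1≤i,j≤p}` -/
def fschur (p : ℕ) (lam : Fin p → ℕ) (x : Fin p → R) (a : ℤ → R) : R :=
  Matrix.det (Matrix.of fun i j : Fin p =>
    fh p x (shiftSeq a (-((j : ℕ) : ℤ))) (((lam i : ℕ) : ℤ) - ((i : ℕ) : ℤ) + ((j : ℕ) : ℤ)))

def fhn (p : ℕ) (x : Fin p → R) (a : ℤ → R) (k : ℕ) : R :=
  ∑ f ∈ Finset.univ.filter (fun f : Fin k → Fin p => Monotone f),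
    ∏ r : Fin k, (x (f r) - a (((f r : ℕ) : ℤ) + ((r : ℕ) : ℤ) + 1))

lemma fh_natCast (p : ℕ) (x : Fin p → R) (a : ℤ → R) (k : ℕ) :
    fh p x a (k : ℤ) = fhn p x a k := by
  simp [fh, fhn]

lemma fhn_zero (p : ℕ) (x : Fin p → R) (a : ℤ → R) : fhn p x a 0 = 1 := by
  unfold fhn
  rw [Finset.filter_true_of_mem (fun f _ => Subsingleton.monotone f)]
  simp

lemma fhn_p0 (x : Fin 0 → R) (a : ℤ → R) (k : ℕ) : fhn 0 x a (k+1) = 0 := by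
  simp [fhn]

lemma mono_snoc {k p : ℕ} {g : Fin k → Fin (p+1)} (hg : Monotone g) :
    Monotone (Fin.snoc g (Fin.last p) : Fin (k+1) → Fin (p+1)) := by
  intro i j hij
  rcases Fin.eq_castSucc_or_eq_last j with ⟨j', rfl⟩ | rfl
  · rcases Fin.eq_castSucc_or_eq_last i with ⟨i', rfl⟩ | rfl
    · simpa [Fin.snoc_castSucc] using hg (Fin.castSucc_le_castSucc_iff.mp hij)
    · exact absurd hij (not_le.mpr (Fin.castSucc_lt_last j'))
  · simp [Fin.snoc_last, Fin.le_last]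

lemma fhn_rec (p k : ℕ) (x : Fin (p+1) → R) (a : ℤ → R) :
    fhn (p+1) x a (k+1) = fhn p (x ∘ Fin.castSucc) a (k+1)
      + (x (Fin.last p) - a ((p:ℤ) + (k:ℤ) + 1)) * fhn (p+1) x a k := by
  unfold fhn
  rw [← Finset.sum_filter_add_sum_filter_not
    (Finset.univ.filter (fun f : Fin (k+1) → Fin (p+1) => Monotone f))
    (fun f => f (Fin.last k) = Fin.last p), Finset.filter_filter, Finset.filter_filter,
    add_comm]
  congr 1
  · -- f last < last : bijection with monotone g : Fin (k+1) → Fin p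
    refine (Finset.sum_bij (fun g _ => (Fin.castSucc ∘ g : Fin (k+1) → Fin (p+1)))
      ?_ ?_ ?_ ?_).symm
    · intro g hg
      simp only [Finset.mem_filter, Finset.mem_univ, true_and] at hg ⊢
      exact ⟨fun i j h => Fin.castSucc_le_castSucc_iff.mpr (hg h),
        Fin.ne_of_lt (Fin.castSucc_lt_last _)⟩
    · intro g₁ h₁ g₂ h₂ h
      funext r
      exact Fin.castSucc_injective _ (congrFun h r)
    · intro f hf
      simp only [Finset.mem_filter, Finset.mem_univ, true_and] at hf
      obtain ⟨hmono, hne⟩ := hf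
      have hlt : ∀ r, f r < Fin.last p := fun r =>
        lt_of_le_of_lt (hmono (Fin.le_last r)) (lt_of_le_of_ne (Fin.le_last _) hne)
      refine ⟨fun r => (f r).castPred (Fin.ne_of_lt (hlt r)), ?_, ?_⟩
      · simp only [Finset.mem_filter, Finset.mem_univ, true_and]
        intro i j h
        have := hmono h
        rwa [Fin.le_def, Fin.coe_castPred, Fin.coe_castPred, ← Fin.le_def]
      · funext r; simp [Fin.castSucc_castPred]
    · intro g hg
      refine Finset.prod_congr rfl fun r _ => ?_
      simp
  · -- f last = last : bijection with monotone g : Fin k → Fin (p+1)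
    rw [Finset.mul_sum]
    refine (Finset.sum_bij (fun g _ => (Fin.snoc g (Fin.last p) : Fin (k+1) → Fin (p+1)))
      ?_ ?_ ?_ ?_).symm
    · intro g hg
      simp only [Finset.mem_filter, Finset.mem_univ, true_and] at hg ⊢
      exact ⟨mono_snoc hg, Fin.snoc_last _ _⟩
    · intro g₁ h₁ g₂ h₂ h
      funext r
      have := congrFun h r.castSucc
      simpa [Fin.snoc_castSucc] using this
    · intro f hf
      simp only [Finset.mem_filter, Finset.mem_univ, true_and] at hf
      obtain ⟨hmono, hlast⟩ := hf
      refine ⟨f ∘ Fin.castSucc, ?_, ?_⟩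
      · simp only [Finset.mem_filter, Finset.mem_univ, true_and]
        exact fun i j h => hmono (Fin.castSucc_le_castSucc_iff.mpr h)
      · funext r
        rcases Fin.eq_castSucc_or_eq_last r with ⟨r', rfl⟩ | rfl
        · simp [Fin.snoc_castSucc]
        · simp [Fin.snoc_last, hlast]
    · intro g hg
      rw [Fin.prod_univ_castSucc]
      simp only [Fin.snoc_castSucc, Fin.snoc_last, Fin.val_last, Fin.coe_castSucc]
      ring

lemma fhn_main (p : ℕ) : ∀ (k : ℕ) (x : Fin p → R) (a : ℤ → R),
    fhn p x (shiftSeq a (-1)) (k+1)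
      = fhn p x a (k+1) + (a ((k:ℤ) + (p:ℤ)) - a 0) * fhn p x a k := by
  induction p with
  | zero =>
    intro k x a
    cases k with
    | zero => simp [fhn_p0, fhn_zero]
    | succ k => simp [fhn_p0]
  | succ p ih =>
    intro k
    induction k with
    | zero =>
      intro x a
      rw [fhn_rec p 0 x (shiftSeq a (-1)), ih 0 (x ∘ Fin.castSucc) a,
        fhn_rec p 0 x a, fhn_zero, fhn_zero, fhn_zero]
      simp only [shiftSeq]
      push_cast
      ring_nf
    | succ k ihk =>
      intro x a
      rw [fhn_rec p (k+1) x (shiftSeq a (-1)), ih (k+1) (x ∘ Fin.castSucc) a,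
        ihk x a, fhn_rec p (k+1) x a, fhn_rec p k x a]
      simp only [shiftSeq]
      push_cast
      ring_nf

/-- `h_{i+1}(x|τ^{-1}a) = h_{i+1}(x|a) + (a_{i+p} - a_0)·h_i(x|a)`. -/
theorem fh_shift_recurrence (p : ℕ) (x : Fin p → R) (a : ℤ → R) (i : ℕ) :
    fh p x (shiftSeq a (-1)) ((i : ℤ) + 1) =
      fh p x a ((i : ℤ) + 1) + (a ((i : ℤ) + (p : ℤ)) - a 0) * fh p x a (i : ℤ) := by
  have h1 : ((i : ℤ) + 1) = ((i + 1 : ℕ) : ℤ) := by push_cast; ring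
  rw [h1, fh_natCast, fh_natCast, fh_natCast, fhn_main]
end
end

section
/- For a doubly infinite sequence a = (a_i)_{i∈ℤ} and variables x_1,...,x_p, the factorial elementary functions satisfy e_{j+1}(x | τa) = e_{j+1}(x | a) + (a_1 − a_{p−j+1}) · e_j(x | a), where (τa)_n = a_{n+1}. -/
/-!
Splitting the strictly increasing index tuples `i_1 < ⋯ < i_k` according to whether `i_k = p + 1`
gives the recursion `e_k(x|a) = e_k(x'|a) + (x_{p+1} - a_{p-k+2}) e_{k-1}(x'|a)` in the number of
variables, `x'` being `x` without its last entry. Induction on `p` then proves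
`e_k(x|τa) = e_k(x|a) + (a_1 - a_{p-k+2}) e_{k-1}(x|a)` for every `k`: expanding both sides with
the recursion leaves the same combination of `e_k`, `e_{k-1}`, `e_{k-2}` of `x'`.
-/

open Finset
open scoped Classical

noncomputable section

variable {R : Type*} [CommRing R]

namespace Fin

theorem strictMono_snoc {α : Type*} [Preorder α] {n : ℕ} {g : Fin n → α} (hg : StrictMono g)
    {b : α} (hb : ∀ r, g r < b) : StrictMono (snoc g b : Fin (n + 1) → α) := by
  intro i j hij
  induction j using lastCases with
  | last =>
    induction i using lastCases with
    | last => exact absurd hij (lt_irrefl _)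
    | cast i => simpa using hb i
  | cast j =>
    induction i using lastCases with
    | last => exact absurd hij (not_lt.2 (le_last _))
    | cast i => simpa using hg (castSucc_lt_castSucc_iff.1 hij)

theorem sum_strictMono_succ {M : Type*} [AddCommMonoid M] {m p : ℕ}
    (F : (Fin (m + 1) → Fin (p + 1)) → M) :
    ∑ f ∈ univ.filter (fun f : Fin (m + 1) → Fin (p + 1) => StrictMono f), F f =
      ∑ g ∈ univ.filter (fun g : Fin (m + 1) → Fin p => StrictMono g), F (castSucc ∘ g) +
      ∑ g ∈ univ.filter (fun g : Fin m → Fin p => StrictMono g),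
        F (snoc (castSucc ∘ g) (last p)) := by
  rw [← sum_filter_not_add_sum_filter _ (fun f => f (last m) = last p)]
  have avoid : (univ.filter fun f : Fin (m + 1) → Fin (p + 1) => StrictMono f).filter
      (fun f => f (last m) ≠ last p) =
      (univ.filter fun g : Fin (m + 1) → Fin p => StrictMono g).image (castSucc ∘ ·) := by
    ext f
    simp only [mem_filter, mem_univ, true_and, mem_image]
    constructor
    · rintro ⟨hf, hlast⟩
      have hne (r : Fin (m + 1)) : f r ≠ last p :=
        ((hf.monotone (le_last r)).trans_lt (lt_last_iff_ne_last.2 hlast)).ne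
      refine ⟨fun r => (f r).castPred (hne r), fun i j hij => ?_,
        funext fun r => castSucc_castPred _ _⟩
      exact castPred_lt_castPred_iff.2 (hf hij)
    · rintro ⟨g, hg, rfl⟩
      exact ⟨strictMono_castSucc.comp hg, (castSucc_lt_last _).ne⟩
  have hit : (univ.filter fun f : Fin (m + 1) → Fin (p + 1) => StrictMono f).filter
      (fun f => f (last m) = last p) =
      (univ.filter fun g : Fin m → Fin p => StrictMono g).image
        (fun g => snoc (castSucc ∘ g) (last p)) := by
    ext f
    simp only [mem_filter, mem_univ, true_and, mem_image]
    constructor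
    · rintro ⟨hf, hlast⟩
      have hne (r : Fin m) : f r.castSucc ≠ last p :=
        ne_last_of_lt (hlast ▸ hf (castSucc_lt_last r))
      refine ⟨fun r => (f r.castSucc).castPred (hne r), fun i j hij => ?_, ?_⟩
      · exact castPred_lt_castPred_iff.2 (hf (castSucc_lt_castSucc_iff.2 hij))
      · conv_rhs => rw [← snoc_init_self f, hlast]
        exact congrArg (snoc · _) (funext fun r => castSucc_castPred _ _)
    · rintro ⟨g, hg, rfl⟩
      exact ⟨strictMono_snoc (strictMono_castSucc.comp hg) fun r => castSucc_lt_last _,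
        snoc_last _ _⟩
  rw [avoid, hit, sum_image, sum_image]
  · exact fun g _ h _ hgh => (castSucc_injective p).comp_left (by simpa using congrArg init hgh)
  · exact fun g _ h _ hgh => (castSucc_injective p).comp_left hgh

end Fin

section FactorialElementary

variable {p : ℕ} (a : ℤ → R)

theorem fe_of_neg (x : Fin p → R) {k : ℤ} (hk : k < 0) : fe p x a k = 0 :=
  if_neg (not_le.2 hk)

theorem fe_natCast (x : Fin p → R) (m : ℕ) :
    fe p x a m = ∑ f ∈ univ.filter (fun f : Fin m → Fin p => StrictMono f),
      ∏ r : Fin m, (x (f r) - a (((f r : ℕ) : ℤ) - ((r : ℕ) : ℤ) + 1)) := by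
  rw [fe, if_pos (Int.natCast_nonneg m)]
  rfl

theorem fe_zero (x : Fin p → R) : fe p x a 0 = 1 := by
  rw [← Nat.cast_zero, fe_natCast]
  simp [StrictMono]

theorem fe_of_fin_zero (x : Fin 0 → R) (k : ℤ) : fe 0 x a k = if k = 0 then 1 else 0 := by
  rcases lt_trichotomy k 0 with hk | rfl | hk
  · simp [fe_of_neg a x hk, hk.ne]
  · simp [fe_zero]
  · lift k to ℕ using hk.le
    obtain ⟨m, rfl⟩ := Nat.exists_eq_succ_of_ne_zero (by omega : k ≠ 0)
    rw [fe_natCast, if_neg hk.ne']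
    simp

theorem fe_succ (x : Fin (p + 1) → R) (k : ℤ) :
    fe (p + 1) x a k = fe p (x ∘ Fin.castSucc) a k +
      (x (Fin.last p) - a ((p : ℤ) - k + 2)) * fe p (x ∘ Fin.castSucc) a (k - 1) := by
  rcases lt_or_ge k 0 with hk | hk
  · simp [fe_of_neg a _ hk, fe_of_neg a _ (show k - 1 < 0 by omega)]
  lift k to ℕ using hk
  cases k with
  | zero => simp [fe_zero, fe_of_neg]
  | succ m =>
    have hprev : ((m + 1 : ℕ) : ℤ) - 1 = m := by omega
    have hidx : (p : ℤ) - ((m + 1 : ℕ) : ℤ) + 2 = (p : ℤ) - (m : ℤ) + 1 := by omega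
    rw [hprev, hidx, fe_natCast, fe_natCast, fe_natCast, Fin.sum_strictMono_succ, mul_sum]
    congr 1
    refine sum_congr rfl fun g _ => ?_
    rw [Fin.prod_univ_castSucc, mul_comm]
    simp

theorem fe_shiftSeq_one (x : Fin p → R) (k : ℤ) :
    fe p x (shiftSeq a 1) k = fe p x a k + (a 1 - a ((p : ℤ) - k + 2)) * fe p x a (k - 1) := by
  induction p generalizing k with
  | zero =>
    simp only [fe_of_fin_zero]
    rcases eq_or_ne k 1 with rfl | hk1
    · norm_num
    · simp [sub_eq_zero, hk1]
  | succ p ih =>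
    rw [fe_succ, fe_succ a, fe_succ a _ (k - 1), ih, ih]
    have hk : (p : ℤ) - (k - 1) + 2 = ((p + 1 : ℕ) : ℤ) - k + 2 := by push_cast; ring
    have hshift : shiftSeq a 1 ((p : ℤ) - k + 2) = a (((p + 1 : ℕ) : ℤ) - k + 2) := by
      rw [shiftSeq]; push_cast; ring_nf
    rw [hk, hshift]
    ring

end FactorialElementary

/-- `e_{j+1}(x|τa) = e_{j+1}(x|a) + (a_1 - a_{p-j+1})·e_j(x|a)`. -/
theorem fe_shift_recurrence (p : ℕ) (x : Fin p → R) (a : ℤ → R) (j : ℕ) :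
    fe p x (shiftSeq a 1) ((j : ℤ) + 1) =
      fe p x a ((j : ℤ) + 1) + (a 1 - a ((p : ℤ) - (j : ℤ) + 1)) * fe p x a (j : ℤ) := by
  rw [fe_shiftSeq_one, add_sub_cancel_right]
  congr 4
  ring
end
end

section
/- For any integer k > p, the k×k determinant det( h_{1+j−i}(x | τ^{1−j}a) )_{1 ≤ i,j ≤ k} vanishes, where h is the factorial complete homogeneous function in p variables x_1,...,x_p. -/
open Finset
open scoped Classical

noncomputable section

variable {R : Type*} [CommRing R]

lemma keyA (p n : ℕ) (x : Fin (p+1) → R) (b : ℤ → R) :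
    ∑ f ∈ (Finset.univ.filter (fun f : Fin (n+1) → Fin (p+1) => Monotone f)).filter
        (fun f => ¬ f (Fin.last n) = Fin.last p),
      ∏ r : Fin (n+1), (x (f r) - b (((f r : ℕ) : ℤ) + ((r : ℕ) : ℤ) + 1))
    = ∑ f ∈ Finset.univ.filter (fun f : Fin (n+1) → Fin p => Monotone f),
        ∏ r : Fin (n+1), (x ((f r).castSucc) - b (((f r : ℕ) : ℤ) + ((r : ℕ) : ℤ) + 1)) := by
  classical
  refine Finset.sum_bij' (i := fun f hf => fun r => (f r).castPred ?_)
    (j := fun g hg => fun r => (g r).castSucc) ?_ ?_ ?_ ?_ ?_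
  · -- f r ≠ last
    simp only [Finset.mem_filter, Finset.mem_univ, true_and] at hf
    intro hEq
    have h1 : f r ≤ f (Fin.last n) := hf.1 (Fin.le_last r)
    have h2 := Fin.le_last (f (Fin.last n))
    exact hf.2 (le_antisymm h2 (hEq ▸ h1))
  · intro f hf
    simp only [Finset.mem_filter, Finset.mem_univ, true_and] at hf ⊢
    intro r s hrs
    have h := hf.1 hrs
    rw [Fin.le_def] at h ⊢
    simpa using h
  · intro g hg
    simp only [Finset.mem_filter, Finset.mem_univ, true_and] at hg ⊢
    constructor
    · exact Fin.strictMono_castSucc.monotone.comp hg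
    · intro hEq
      have h2 : ((g (Fin.last n)).castSucc : ℕ) = p := by rw [hEq]; simp
      have := (g (Fin.last n)).is_lt
      simp at h2
      omega
  · intro f hf; funext r; simp
  · intro g hg; funext r; simp
  · intro f hf
    apply Finset.prod_congr rfl
    intro r _
    simp

lemma keyB (p n : ℕ) (x : Fin (p+1) → R) (b : ℤ → R) :
    ∑ f ∈ (Finset.univ.filter (fun f : Fin (n+1) → Fin (p+1) => Monotone f)).filter
        (fun f => f (Fin.last n) = Fin.last p),
      ∏ r : Fin (n+1), (x (f r) - b (((f r : ℕ) : ℤ) + ((r : ℕ) : ℤ) + 1))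
    = (x (Fin.last p) - b ((p : ℤ) + (n : ℤ) + 1)) *
        ∑ f ∈ Finset.univ.filter (fun f : Fin n → Fin (p+1) => Monotone f),
          ∏ r : Fin n, (x (f r) - b (((f r : ℕ) : ℤ) + ((r : ℕ) : ℤ) + 1)) := by
  classical
  rw [Finset.mul_sum]
  refine Finset.sum_bij' (i := fun f _ => f ∘ Fin.castSucc)
    (j := fun g _ => Fin.snoc g (Fin.last p)) ?_ ?_ ?_ ?_ ?_
  · intro f hf
    simp only [Finset.mem_filter, Finset.mem_univ, true_and] at hf ⊢
    exact hf.1.comp Fin.strictMono_castSucc.monotone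
  · intro g hg
    simp only [Finset.mem_filter, Finset.mem_univ, true_and] at hg ⊢
    refine ⟨?_, by simp⟩
    intro r s hrs
    rcases Fin.eq_castSucc_or_eq_last s with ⟨s', rfl⟩ | rfl
    · rcases Fin.eq_castSucc_or_eq_last r with ⟨r', rfl⟩ | rfl
      · simp only [Fin.snoc_castSucc]
        apply hg
        rw [Fin.le_def] at hrs ⊢
        simpa using hrs
      · exfalso
        exact absurd (lt_of_le_of_lt hrs (Fin.castSucc_lt_last s')) (lt_irrefl _)
    · simp only [Fin.snoc_last]
      exact Fin.le_last _
  · intro f hf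
    simp only [Finset.mem_filter, Finset.mem_univ, true_and] at hf
    funext r
    rcases Fin.eq_castSucc_or_eq_last r with ⟨r', rfl⟩ | rfl
    · simp
    · simp [hf.2]
  · intro g hg
    funext r
    simp
  · intro f hf
    simp only [Finset.mem_filter, Finset.mem_univ, true_and] at hf
    rw [Fin.prod_univ_castSucc, mul_comm]
    congr 1
    rw [hf.2]
    simp

lemma fh_ofNat (p : ℕ) (x : Fin p → R) (a : ℤ → R) (n : ℕ) :
    fh p x a (n : ℤ)
    = ∑ f ∈ Finset.univ.filter (fun f : Fin n → Fin p => Monotone f),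
        ∏ r : Fin n, (x (f r) - a (((f r : ℕ) : ℤ) + ((r : ℕ) : ℤ) + 1)) := by
  rw [fh, if_pos (Int.ofNat_nonneg n)]
  rfl

lemma fh_neg (p : ℕ) (x : Fin p → R) (a : ℤ → R) {m : ℤ} (hm : m < 0) :
    fh p x a m = 0 := by
  rw [fh, if_neg (not_le.2 hm)]

lemma fh_zero (p : ℕ) (x : Fin p → R) (a : ℤ → R) : fh p x a 0 = 1 := by
  have := fh_ofNat p x a 0
  simp only [Nat.cast_zero] at this
  rw [this]
  haveI : Unique (Fin 0 → Fin p) := ⟨⟨fun i => i.elim0⟩, fun f => funext fun i => i.elim0⟩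
  have hfil : (Finset.univ.filter (fun f : Fin 0 → Fin p => Monotone f)) = Finset.univ := by
    apply Finset.filter_true_of_mem
    intro f _
    show Monotone f
    intro u v _
    exact Fin.elim0 u
  rw [hfil]
  simp

lemma fh_rec (p : ℕ) (x : Fin (p+1) → R) (b : ℤ → R) (m : ℤ) :
    fh (p+1) x b m = fh p (fun i => x i.castSucc) b m
      + (x (Fin.last p) - b ((p : ℤ) + m)) * fh (p+1) x b (m - 1) := by
  rcases lt_trichotomy m 0 with h | rfl | h
  · rw [fh_neg _ _ _ h, fh_neg _ _ _ h, fh_neg _ _ _ (by omega), mul_zero, add_zero]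
  · rw [fh_zero, fh_zero, fh_neg _ _ _ (by norm_num), mul_zero, add_zero]
  · obtain ⟨n, rfl⟩ : ∃ n : ℕ, m = ((n + 1 : ℕ) : ℤ) := ⟨(m - 1).toNat, by omega⟩
    have h1 : ((n + 1 : ℕ) : ℤ) - 1 = ((n : ℕ) : ℤ) := by push_cast; ring
    rw [h1, fh_ofNat, fh_ofNat, fh_ofNat]
    rw [← Finset.sum_filter_add_sum_filter_not
      (Finset.univ.filter (fun f : Fin (n+1) → Fin (p+1) => Monotone f))
      (fun f => f (Fin.last n) = Fin.last p), keyA, keyB]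
    have h2 : (p : ℤ) + (n : ℤ) + 1 = (p : ℤ) + ((n + 1 : ℕ) : ℤ) := by push_cast; ring
    rw [h2, add_comm]

lemma claim (a : ℤ → R) : ∀ (p : ℕ) (x : Fin p → R),
    ∃ c : ℕ → R, c 0 = 1 ∧ (∀ i, p < i → c i = 0) ∧
      ∀ j : ℕ, ∑ i ∈ Finset.range (p+1),
        c i * fh p x (shiftSeq a (-(j : ℤ))) (1 + (j : ℤ) - (i : ℤ)) = 0 := by
  intro p
  induction p with
  | zero =>
    intro x
    refine ⟨fun i => if i = 0 then 1 else 0, by simp, fun i hi => if_neg (by omega), ?_⟩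
    intro j
    rw [Finset.sum_range_one]
    beta_reduce
    rw [if_pos rfl, one_mul,
      (by push_cast; ring : (1 + (j : ℤ) - ((0 : ℕ) : ℤ)) = ((j + 1 : ℕ) : ℤ)), fh_ofNat]
    haveI : IsEmpty (Fin (j+1) → Fin 0) := ⟨fun f => (f 0).elim0⟩
    simp
  | succ p ih =>
    intro x
    obtain ⟨c, hc0, hcs, hsum⟩ := ih (fun i => x i.castSucc)
    refine ⟨fun i => c i - (x (Fin.last p) - a ((p : ℤ) + 2 - (i : ℤ))) *
        (if i = 0 then 0 else c (i - 1)), by simp [hc0], ?_, ?_⟩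
    · intro i hi
      beta_reduce
      rw [if_neg (by omega), hcs i (by omega), hcs (i-1) (by omega)]
      ring
    · intro j
      set b := shiftSeq a (-(j : ℤ)) with hb
      have hM : ∀ i : ℕ, fh p (fun t => x t.castSucc) b (1 + (j : ℤ) - (i : ℤ))
          = fh (p+1) x b (1 + (j : ℤ) - (i : ℤ))
            - (x (Fin.last p) - a ((p : ℤ) + 1 - (i : ℤ))) *
              fh (p+1) x b (1 + (j : ℤ) - ((i + 1 : ℕ) : ℤ)) := by
        intro i
        have h3 : (1 + (j : ℤ) - (i : ℤ)) - 1 = 1 + (j : ℤ) - ((i + 1 : ℕ) : ℤ) := by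
          push_cast; ring
        have h4 : b ((p : ℤ) + (1 + (j : ℤ) - (i : ℤ))) = a ((p : ℤ) + 1 - (i : ℤ)) := by
          rw [hb]; unfold shiftSeq; congr 1; ring
        rw [fh_rec p x b (1 + (j : ℤ) - (i : ℤ)), h3, h4]
        ring
      calc ∑ i ∈ Finset.range (p+1+1),
            (c i - (x (Fin.last p) - a ((p : ℤ) + 2 - (i : ℤ))) * (if i = 0 then 0 else c (i-1)))
              * fh (p+1) x b (1 + (j : ℤ) - (i : ℤ))
          = ∑ i ∈ Finset.range (p+2), c i * fh (p+1) x b (1 + (j : ℤ) - (i : ℤ))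
            - ∑ i ∈ Finset.range (p+2),
              ((x (Fin.last p) - a ((p : ℤ) + 2 - (i : ℤ))) * (if i = 0 then 0 else c (i-1)))
                * fh (p+1) x b (1 + (j : ℤ) - (i : ℤ)) := by
            rw [← Finset.sum_sub_distrib]
            apply Finset.sum_congr rfl
            intro i _
            ring
        _ = ∑ i ∈ Finset.range (p+1), c i * fh (p+1) x b (1 + (j : ℤ) - (i : ℤ))
            - ∑ i ∈ Finset.range (p+1),
              ((x (Fin.last p) - a ((p : ℤ) + 1 - (i : ℤ))) * c i)
                * fh (p+1) x b (1 + (j : ℤ) - ((i + 1 : ℕ) : ℤ)) := by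
            congr 1
            · rw [Finset.sum_range_succ, hcs (p+1) (by omega), zero_mul, add_zero]
            · rw [Finset.sum_range_succ']
              beta_reduce
              rw [if_pos rfl, mul_zero, zero_mul, add_zero]
              apply Finset.sum_congr rfl
              intro i _
              rw [if_neg (Nat.succ_ne_zero i), Nat.add_sub_cancel]
              have : (p : ℤ) + 2 - ((i + 1 : ℕ) : ℤ) = (p : ℤ) + 1 - (i : ℤ) := by push_cast; ring
              rw [this]
        _ = ∑ i ∈ Finset.range (p+1), c i * fh p (fun t => x t.castSucc) b (1 + (j : ℤ) - (i : ℤ)) := by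
            rw [← Finset.sum_sub_distrib]
            apply Finset.sum_congr rfl
            intro i _
            rw [hM i]
            ring
        _ = 0 := hsum j


/-- For `k > p`, `det( h_{1+j-i}(x|τ^{1-j}a) )_{1≤i,j≤k} = 0`. -/
theorem jacobiTrudi_det_eq_zero (p : ℕ) (x : Fin p → R) (a : ℤ → R) (k : ℕ) (hk : p < k) :
    Matrix.det (Matrix.of fun i j : Fin k =>
      fh p x (shiftSeq a (-((j : ℕ) : ℤ))) (1 + ((j : ℕ) : ℤ) - ((i : ℕ) : ℤ))) = 0 := by
  classical
  haveI : NeZero k := ⟨by omega⟩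
  set A : Matrix (Fin k) (Fin k) R := Matrix.of fun i j : Fin k =>
    fh p x (shiftSeq a (-((j : ℕ) : ℤ))) (1 + ((j : ℕ) : ℤ) - ((i : ℕ) : ℤ)) with hA
  obtain ⟨c, hc0, hcs, hsum⟩ := claim a p x
  have hcomb : (∑ i : Fin k, (c (i : ℕ)) • A i) = 0 := by
    funext j
    simp only [Finset.sum_apply, Pi.smul_apply, smul_eq_mul, Pi.zero_apply, hA,
      Matrix.of_apply]
    rw [Fin.sum_univ_eq_sum_range (fun i : ℕ => c i * fh p x (shiftSeq a (-((j : ℕ) : ℤ)))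
          (1 + ((j : ℕ) : ℤ) - ((i : ℕ) : ℤ))) k]
    rw [← Finset.sum_subset (Finset.range_subset_range.2 (by omega) :
      Finset.range (p+1) ⊆ Finset.range k)]
    · exact hsum j
    · intro i _ hi
      rw [hcs i (by simpa using hi), zero_mul]
  have := Matrix.det_updateRow_sum A 0 (fun i => c (i : ℕ))
  rw [hcomb] at this
  simp only [Fin.val_zero, hc0, one_smul] at this
  rw [← this]
  apply Matrix.det_eq_zero_of_row_eq_zero 0
  intro j
  simp
end
end

section
/- The factorial elementary functions e_1(x|a),...,e_p(x|a) generate the ℤ[a]-algebra of all polynomials in ℤ[a][x_1,...,x_p] symmetric in the x-variables; moreover e_1(x|a),...,e_p(x|a) are algebraically independent over ℤ[a]. -/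
open Finset
open scoped Classical

noncomputable section

variable {R : Type*} [CommRing R]

/-- clean ℕ-indexed version of `fe` -/
def feN (p : ℕ) (x : Fin p → R) (a : ℤ → R) (k : ℕ) : R :=
  ∑ f ∈ Finset.univ.filter (fun f : Fin k → Fin p => StrictMono f),
    ∏ r : Fin k, (x (f r) - a (((f r : ℕ) : ℤ) - ((r : ℕ) : ℤ) + 1))

lemma fe_natCast_s13 (p : ℕ) (x : Fin p → R) (a : ℤ → R) (k : ℕ) :
    fe p x a (k : ℤ) = feN p x a k := by
  rw [fe, if_pos (by positivity)]
  have : ((k : ℤ)).toNat = k := Int.toNat_natCast k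
  exact Finset.sum_congr (by congr) (fun f _ => rfl)

lemma feN_zero (p : ℕ) (x : Fin p → R) (a : ℤ → R) : feN p x a 0 = 1 := by
  rw [feN]
  rw [show (Finset.univ.filter (fun f : Fin 0 → Fin p => StrictMono f)) = Finset.univ from by
    ext f; simp only [mem_filter, mem_univ, true_and, iff_true]
    intro a b hab; exact a.elim0]
  simp

lemma feN_of_gt (p : ℕ) (x : Fin p → R) (a : ℤ → R) (k : ℕ) (h : p < k) :
    feN p x a k = 0 := by
  rw [feN]
  rw [show (Finset.univ.filter (fun f : Fin k → Fin p => StrictMono f)) = ∅ from by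
    ext f; simp only [mem_filter, mem_univ, true_and, notMem_empty, iff_false]
    intro hf
    have := Fintype.card_le_of_injective f hf.injective
    simp at this; omega]
  simp
lemma strictMono_snoc {p k : ℕ} (g : Fin k → Fin p) (hg : StrictMono g) :
    StrictMono (Fin.snoc (fun r => Fin.castSucc (g r)) (Fin.last p) : Fin (k+1) → Fin (p+1)) := by
  intro u v huv
  induction v using Fin.lastCases with
  | last =>
    have hu : u ≠ Fin.last k := Fin.lt_last_iff_ne_last.1 huv
    obtain ⟨u', rfl⟩ := Fin.exists_castSucc_eq.2 hu
    rw [Fin.snoc_castSucc, Fin.snoc_last]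
    exact Fin.castSucc_lt_last _
  | cast v' =>
    have hu : u < Fin.castSucc v' := huv
    have hu' : u ≠ Fin.last k := Fin.lt_last_iff_ne_last.1 (lt_of_lt_of_le hu (Fin.le_last _))
    obtain ⟨u', rfl⟩ := Fin.exists_castSucc_eq.2 hu'
    rw [Fin.snoc_castSucc, Fin.snoc_castSucc]
    exact Fin.castSucc_lt_castSucc_iff.2 (hg (Fin.castSucc_lt_castSucc_iff.1 hu))

lemma feN_succ (p : ℕ) (x : Fin (p+1) → R) (a : ℤ → R) (k : ℕ) :
    feN (p+1) x a (k+1)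
      = feN p (x ∘ Fin.castSucc) a (k+1)
        + (x (Fin.last p) - a ((p : ℤ) - (k : ℤ) + 1)) * feN p (x ∘ Fin.castSucc) a k := by
  rw [feN,
    ← Finset.sum_filter_add_sum_filter_not _
      (fun f : Fin (k+1) → Fin (p+1) => f (Fin.last k) = Fin.last p), add_comm]
  congr 1
  · -- part with f (last k) ≠ last p
    rw [feN]
    refine Finset.sum_bij'
      (i := fun f hf => fun r => (f r).castLT ?_)
      (j := fun g _ => fun r => Fin.castSucc (g r)) ?_ ?_ ?_ ?_ ?_
    · -- bound
      simp only [mem_filter, mem_univ, true_and] at hf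
      have h1 : (f r : ℕ) ≤ (f (Fin.last k) : ℕ) := hf.1.monotone (Fin.le_last r)
      have h2 : (f (Fin.last k) : ℕ) ≤ p := Fin.is_le _
      have h3 : (f (Fin.last k) : ℕ) ≠ p := by
        intro h; exact hf.2 (Fin.ext (by simpa using h))
      omega
    · -- i maps into target
      intro f hf
      simp only [mem_filter, mem_univ, true_and] at hf ⊢
      intro u v huv
      have := hf.1 huv
      simp only [Fin.lt_def, Fin.coe_castLT]
      exact this
    · -- j maps into source
      intro g hg
      simp only [mem_filter, mem_univ, true_and] at hg ⊢
      constructor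
      · intro u v huv
        have := hg huv
        simp only [Fin.lt_def, Fin.coe_castSucc]
        exact this
      · intro h
        have h' := congrArg Fin.val h
        simp only [Fin.coe_castSucc, Fin.val_last] at h'
        exact absurd h' (Nat.ne_of_lt (g (Fin.last k)).is_lt)
    · intro f hf; funext r; exact Fin.castSucc_castLT _ _
    · intro g hg; funext r; exact Fin.ext rfl
    · intro f hf
      exact Finset.prod_congr rfl fun r _ => by simp
  · -- part with f (last k) = last p
    rw [feN, Finset.mul_sum]
    refine Finset.sum_bij'
      (i := fun f hf => fun r => (f (Fin.castSucc r)).castLT ?_)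
      (j := fun g _ => Fin.snoc (fun r => Fin.castSucc (g r)) (Fin.last p)) ?_ ?_ ?_ ?_ ?_
    · -- bound
      simp only [mem_filter, mem_univ, true_and] at hf
      have h1 : f (Fin.castSucc r) < f (Fin.last k) := hf.1 (Fin.castSucc_lt_last r)
      rw [hf.2] at h1
      simpa [Fin.lt_iff_val_lt_val] using h1
    · intro f hf
      simp only [mem_filter, mem_univ, true_and] at hf ⊢
      intro u v huv
      have := hf.1 (Fin.castSucc_lt_castSucc_iff.2 huv)
      simp only [Fin.lt_def, Fin.coe_castLT]
      exact this
    · intro g hg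
      simp only [mem_filter, mem_univ, true_and] at hg ⊢
      exact ⟨strictMono_snoc g hg, by rw [Fin.snoc_last]⟩
    · intro f hf
      simp only [mem_filter, mem_univ, true_and] at hf
      funext r
      induction r using Fin.lastCases with
      | last => simp only [Fin.snoc_last, hf.2]
      | cast r' => simp only [Fin.snoc_castSucc, Fin.castSucc_castLT]
    · intro g hg
      funext r
      apply Fin.ext
      simp [Fin.snoc_castSucc]
    · intro f hf
      simp only [mem_filter, mem_univ, true_and] at hf
      rw [Fin.prod_univ_castSucc, mul_comm]
      congr 1
      rw [hf.2]
      simp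
/-- signed complete homogeneous polynomial `(-1)^j h_j(a_1, ..., a_q)` -/
def G (a : ℤ → R) : ℕ → ℕ → R
  | _, 0 => 1
  | 0, _+1 => 0
  | q+1, j+1 => G a q (j+1) - a ((q : ℤ)+1) * G a (q+1) j
  termination_by q j => (q, j)

@[simp] lemma G_zero_right (a : ℤ → R) (q : ℕ) : G a q 0 = 1 := by
  cases q <;> rw [G]

@[simp] lemma G_zero_left (a : ℤ → R) (j : ℕ) : G a 0 (j+1) = 0 := by rw [G]

lemma G_succ_succ (a : ℤ → R) (q j : ℕ) :
    G a (q+1) (j+1) = G a q (j+1) - a ((q : ℤ)+1) * G a (q+1) j := by rw [G]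
lemma feN_eq_sum_G (a : ℤ → R) :
    ∀ (p : ℕ) (x : Fin p → R) (k : ℕ), k ≤ p + 1 →
      feN p x a k = ∑ m ∈ Finset.range (k+1), G a (p+1-k) (k-m) * feN p x 0 m := by
  intro p
  induction p with
  | zero =>
    intro x k hk
    interval_cases k
    · simp [feN_zero]
    · rw [feN_of_gt _ _ _ _ (by omega)]
      rw [show (0+1-1) = 0 from rfl, Finset.sum_range_succ, Finset.sum_range_succ,
        Finset.sum_range_zero, feN_of_gt 0 x 0 1 (by omega)]
      simp
  | succ p IH =>
    intro x k hk
    match k with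
    | 0 => simp [feN_zero]
    | (k'+1) =>
      by_cases hk' : k' ≤ p
      case neg =>
        have hk'' : k' = p + 1 := by omega
        subst hk''
        rw [feN_succ, feN_of_gt _ _ _ _ (by omega), feN_of_gt _ _ _ _ (by omega)]
        rw [show p + 1 + 1 - (p + 1 + 1) = 0 from by omega]
        simp only [mul_zero, add_zero, zero_add]
        symm
        apply Finset.sum_eq_zero
        intro m hm
        rw [Finset.mem_range] at hm
        by_cases hm2 : m ≤ p + 1
        · rw [show p + 1 + 1 - m = (p + 1 - m) + 1 from by omega, G_zero_left, zero_mul]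
        · rw [show m = p + 2 from by omega, feN_of_gt _ _ _ _ (by omega), mul_zero]
      case pos =>
        have hxq : ((p:ℤ) - (k':ℤ) + 1) = (((p - k' : ℕ) : ℤ) + 1) := by omega
        have hsucc0 : ∀ m : ℕ, feN (p+1) x 0 (m+1)
            = feN p (x ∘ Fin.castSucc) 0 (m+1)
              + x (Fin.last p) * feN p (x ∘ Fin.castSucc) 0 m := by
          intro m
          rw [feN_succ]
          simp
        rw [feN_succ, IH (x ∘ Fin.castSucc) (k'+1) (by omega), IH (x ∘ Fin.castSucc) k' (by omega),
          hxq, show p + 1 - (k'+1) = (p - k') from by omega, show p + 1 - k' = (p - k') + 1 from by omega,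
          show p + 1 + 1 - (k'+1) = (p - k') + 1 from by omega]
        rw [Finset.sum_range_succ' (fun m => G a ((p - k')+1) ((k'+1)-m) * feN (p+1) x 0 m) (k'+1)]
        rw [Finset.sum_range_succ' (fun m => G a (p - k') ((k'+1)-m) * feN p (x ∘ Fin.castSucc) 0 m) (k'+1)]
        simp only [Nat.succ_sub_succ, Nat.sub_zero, feN_zero, mul_one, hsucc0, G_succ_succ]
        have hsplit : ∑ m ∈ Finset.range (k'+1), G a ((p - k')+1) (k'-m) *
              (feN p (x ∘ Fin.castSucc) 0 (m+1) + x (Fin.last p) * feN p (x ∘ Fin.castSucc) 0 m)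
            = ∑ m ∈ Finset.range (k'+1), G a ((p - k')+1) (k'-m) * feN p (x ∘ Fin.castSucc) 0 (m+1)
              + x (Fin.last p) * ∑ m ∈ Finset.range (k'+1), G a ((p - k')+1) (k'-m) * feN p (x ∘ Fin.castSucc) 0 m := by
          rw [Finset.mul_sum, ← Finset.sum_add_distrib]
          exact Finset.sum_congr rfl fun m _ => by ring
        rw [hsplit]
        have hA : ∑ m ∈ Finset.range (k'+1), G a (p - k') (k'-m) * feN p (x ∘ Fin.castSucc) 0 (m+1)
              - ∑ m ∈ Finset.range (k'+1), G a ((p - k')+1) (k'-m) * feN p (x ∘ Fin.castSucc) 0 (m+1)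
            = a (((p - k' : ℕ) : ℤ)+1) * ∑ m ∈ Finset.range k', G a ((p - k')+1) (k'-(m+1)) * feN p (x ∘ Fin.castSucc) 0 (m+1) := by
          rw [← Finset.sum_sub_distrib, Finset.sum_range_succ, Nat.sub_self]
          simp only [G_zero_right, sub_self, add_zero]
          rw [Finset.mul_sum]
          apply Finset.sum_congr rfl
          intro m hm
          rw [Finset.mem_range] at hm
          rw [show k' - m = (k' - (m+1)) + 1 from by omega, G_succ_succ]
          ring
        have hB : ∑ m ∈ Finset.range (k'+1), G a ((p - k')+1) (k'-m) * feN p (x ∘ Fin.castSucc) 0 m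
            = ∑ m ∈ Finset.range k', G a ((p - k')+1) (k'-(m+1)) * feN p (x ∘ Fin.castSucc) 0 (m+1)
              + G a ((p - k')+1) k' := by
          rw [Finset.sum_range_succ' (fun m => G a ((p - k')+1) (k'-m) * feN p (x ∘ Fin.castSucc) 0 m) k']
          rw [Nat.sub_zero, feN_zero, mul_one]
        linear_combination hA - a (((p - k' : ℕ) : ℤ)+1) * hB
lemma G_map {S : Type*} [CommRing S] (φ : R →+* S) (a : ℤ → R) :
    ∀ q j, φ (G a q j) = G (fun n => φ (a n)) q j := by
  intro q
  induction q with
  | zero =>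
    intro j
    cases j with
    | zero => simp
    | succ j => simp
  | succ q ihq =>
    intro j
    induction j with
    | zero => simp
    | succ j ihj =>
      rw [G_succ_succ, G_succ_succ, map_sub, map_mul, ihq, ihj]

lemma sum_strictMono_eq_powersetCard (p m : ℕ) (F : Fin p → R) :
    ∑ f ∈ Finset.univ.filter (fun f : Fin m → Fin p => StrictMono f), ∏ r : Fin m, F (f r)
      = ∑ S ∈ Finset.powersetCard m (Finset.univ : Finset (Fin p)), ∏ i ∈ S, F i := by
  refine Finset.sum_bij'
    (i := fun f _ => Finset.image f Finset.univ)
    (j := fun S hS => fun r => S.orderEmbOfFin (by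
      rw [Finset.mem_powersetCard] at hS; exact hS.2) r) ?_ ?_ ?_ ?_ ?_
  · intro f hf
    simp only [Finset.mem_filter, Finset.mem_univ, true_and] at hf
    rw [Finset.mem_powersetCard]
    refine ⟨Finset.subset_univ _, ?_⟩
    rw [Finset.card_image_of_injective _ hf.injective, Finset.card_univ, Fintype.card_fin]
  · intro S hS
    simp only [Finset.mem_filter, Finset.mem_univ, true_and]
    exact (S.orderEmbOfFin _).strictMono
  · intro f hf
    simp only [Finset.mem_filter, Finset.mem_univ, true_and] at hf
    exact (Finset.orderEmbOfFin_unique _ (fun r => Finset.mem_image_of_mem f (Finset.mem_univ r))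
      hf).symm
  · intro S hS
    apply Finset.coe_injective
    rw [Finset.coe_image, Finset.coe_univ]
    rw [Set.image_univ]
    exact Finset.range_orderEmbOfFin S (by
      rw [Finset.mem_powersetCard] at hS; exact hS.2)
  · intro f hf
    simp only [Finset.mem_filter, Finset.mem_univ, true_and] at hf
    exact (Finset.prod_image (fun u _ v _ h => hf.injective h)).symm

lemma feN_zeroSeq (p m : ℕ) (y : Fin p → R) :
    feN p y 0 m = ∑ S ∈ Finset.powersetCard m (Finset.univ : Finset (Fin p)), ∏ i ∈ S, y i := by
  rw [feN, ← sum_strictMono_eq_powersetCard]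
  exact Finset.sum_congr rfl fun f _ => Finset.prod_congr rfl fun r _ => by simp
open MvPolynomial in
lemma key (p k : ℕ) (hk : k < p) :
    fe p (MvPolynomial.X : Fin p → MvPolynomial (Fin p) (MvPolynomial ℤ ℤ))
      (fun i => MvPolynomial.C (MvPolynomial.X i)) ((k : ℤ) + 1)
    = ∑ m ∈ Finset.range (k+2),
        MvPolynomial.C (G (fun n : ℤ => (MvPolynomial.X n : MvPolynomial ℤ ℤ)) (p - k) (k+1-m))
          * MvPolynomial.esymm (Fin p) (MvPolynomial ℤ ℤ) m := by
  have h1 : ((k:ℕ):ℤ) + 1 = ((k+1 : ℕ) : ℤ) := by push_cast; ring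
  rw [h1, fe_natCast_s13, feN_eq_sum_G _ p _ (k+1) (by omega),
    show p + 1 - (k+1) = p - k from by omega]
  apply Finset.sum_congr rfl
  intro m _
  congr 1
  · exact (G_map MvPolynomial.C (fun n : ℤ => (MvPolynomial.X n : MvPolynomial ℤ ℤ))
      (p-k) (k+1-m)).symm
  · rw [feN_zeroSeq]
    rfl
/-- the triangular inverse substitution -/
noncomputable def hinv (p : ℕ) (c : ℕ → ℕ → MvPolynomial ℤ ℤ)
    (XX : ℕ → MvPolynomial (Fin p) (MvPolynomial ℤ ℤ)) :
    ℕ → MvPolynomial (Fin p) (MvPolynomial ℤ ℤ)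
  | k => XX k - ∑ m ∈ (Finset.range (k+1)).attach,
      MvPolynomial.C (c k m) * (if _ : (m:ℕ) = 0 then 1 else hinv p c XX ((m:ℕ)-1))
  termination_by k => k
  decreasing_by
    have := m.2
    rw [Finset.mem_range] at this
    omega

lemma hinv_eq (p : ℕ) (c : ℕ → ℕ → MvPolynomial ℤ ℤ)
    (XX : ℕ → MvPolynomial (Fin p) (MvPolynomial ℤ ℤ)) (k : ℕ) :
    hinv p c XX k = XX k - ∑ m ∈ Finset.range (k+1),
      MvPolynomial.C (c k m) * (if (m:ℕ) = 0 then 1 else hinv p c XX (m-1)) := by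
  rw [hinv]
  congr 1
  rw [← Finset.sum_attach (Finset.range (k+1))
    (fun m => MvPolynomial.C (c k m) * (if m = 0 then 1 else hinv p c XX (m-1)))]
  apply Finset.sum_congr rfl
  intro m _
  split <;> rfl

open MvPolynomial in
/-- The factorial elementary functions `e_1(x|a),...,e_p(x|a)` generate
    the `ℤ[a]`-algebra of symmetric polynomials in `ℤ[a][x_1,...,x_p]`, and they are
    algebraically independent over `ℤ[a]`. -/
theorem fe_generate_and_algebraicallyIndependent (p : ℕ) :
    Algebra.adjoin (MvPolynomial ℤ ℤ)
        (Set.range (fun k : Fin p =>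
          fe p (MvPolynomial.X : Fin p → MvPolynomial (Fin p) (MvPolynomial ℤ ℤ))
            (fun i => MvPolynomial.C (MvPolynomial.X i)) (((k : ℕ) : ℤ) + 1))) =
      MvPolynomial.symmetricSubalgebra (Fin p) (MvPolynomial ℤ ℤ) ∧
    AlgebraicIndependent (MvPolynomial ℤ ℤ)
      (fun k : Fin p =>
        fe p (MvPolynomial.X : Fin p → MvPolynomial (Fin p) (MvPolynomial ℤ ℤ))
          (fun i => MvPolynomial.C (MvPolynomial.X i)) (((k : ℕ) : ℤ) + 1)) := by
  classical
  set a' : ℤ → MvPolynomial ℤ ℤ := fun n : ℤ => (MvPolynomial.X n : MvPolynomial ℤ ℤ) with ha'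
  set c : ℕ → ℕ → MvPolynomial ℤ ℤ := fun k m => G a' (p - k) (k+1-m) with hc
  set F : Fin p → MvPolynomial (Fin p) (MvPolynomial ℤ ℤ) := (fun k : Fin p =>
        fe p (MvPolynomial.X : Fin p → MvPolynomial (Fin p) (MvPolynomial ℤ ℤ))
          (fun i => MvPolynomial.C (MvPolynomial.X i)) (((k : ℕ) : ℤ) + 1)) with hF
  have hkey : ∀ k : Fin p, F k = ∑ m ∈ Finset.range ((k:ℕ)+2),
      MvPolynomial.C (c (k:ℕ) m) * MvPolynomial.esymm (Fin p) (MvPolynomial ℤ ℤ) m :=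
    fun k => key p k k.2
  have hCmem : ∀ (T : Subalgebra (MvPolynomial ℤ ℤ) (MvPolynomial (Fin p) (MvPolynomial ℤ ℤ)))
      (r : MvPolynomial ℤ ℤ), MvPolynomial.C r ∈ T := by
    intro T r
    have := T.algebraMap_mem r
    rwa [MvPolynomial.algebraMap_eq] at this
  have hesymm_mem : ∀ k : ℕ, k < p →
      MvPolynomial.esymm (Fin p) (MvPolynomial ℤ ℤ) (k+1)
        ∈ Algebra.adjoin (MvPolynomial ℤ ℤ) (Set.range F) := by
    intro k
    induction k using Nat.strong_induction_on with
    | _ k IH =>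
    intro hk
    have hsum := hkey ⟨k, hk⟩
    rw [Finset.sum_range_succ] at hsum
    have hc1 : c k (k+1) = 1 := by rw [hc]; simp
    rw [show ((⟨k, hk⟩ : Fin p) : ℕ) = k from rfl, hc1, map_one, one_mul] at hsum
    have heq : MvPolynomial.esymm (Fin p) (MvPolynomial ℤ ℤ) (k+1)
        = F ⟨k, hk⟩ - ∑ m ∈ Finset.range (k+1),
            MvPolynomial.C (c k m) * MvPolynomial.esymm (Fin p) (MvPolynomial ℤ ℤ) m := by
      rw [hsum]; ring
    rw [heq]
    apply sub_mem
    · exact Algebra.subset_adjoin ⟨⟨k, hk⟩, rfl⟩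
    · apply Subalgebra.sum_mem
      intro m hm
      apply mul_mem (hCmem _ _)
      match m with
      | 0 => rw [MvPolynomial.esymm_zero]; exact one_mem _
      | (m'+1) =>
        rw [Finset.mem_range] at hm
        exact IH m' (by omega) (by omega)
  constructor
  · apply le_antisymm
    · apply Algebra.adjoin_le
      rintro _ ⟨k, rfl⟩
      show F k ∈ MvPolynomial.symmetricSubalgebra (Fin p) (MvPolynomial ℤ ℤ)
      rw [hkey k]
      apply Subalgebra.sum_mem
      intro m _
      exact mul_mem (hCmem _ _)
        ((MvPolynomial.mem_symmetricSubalgebra _).2 (MvPolynomial.esymm_isSymmetric _ _ m))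
    · intro q hq
      obtain ⟨P, hP⟩ := MvPolynomial.esymmAlgHom_fin_surjective (R := MvPolynomial ℤ ℤ)
        (n := p) (m := p) le_rfl ⟨q, hq⟩
      have hq' : q = MvPolynomial.aeval
          (fun i : Fin p => MvPolynomial.esymm (Fin p) (MvPolynomial ℤ ℤ) ((i:ℕ)+1)) P := by
        rw [← MvPolynomial.esymmAlgHom_apply, hP]
      rw [hq']
      have h1 : MvPolynomial.aeval
            (fun i : Fin p => MvPolynomial.esymm (Fin p) (MvPolynomial ℤ ℤ) ((i:ℕ)+1)) P
          ∈ (MvPolynomial.aeval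
            (fun i : Fin p => MvPolynomial.esymm (Fin p) (MvPolynomial ℤ ℤ) ((i:ℕ)+1))).range :=
        ⟨P, rfl⟩
      rw [← Algebra.adjoin_range_eq_range_aeval] at h1
      refine Algebra.adjoin_le ?_ h1
      rintro _ ⟨i, rfl⟩
      exact hesymm_mem i i.2
  · rw [algebraicIndependent_iff_injective_aeval]
    set v : Fin p → MvPolynomial (Fin p) (MvPolynomial ℤ ℤ) :=
      fun i : Fin p => MvPolynomial.esymm (Fin p) (MvPolynomial ℤ ℤ) ((i:ℕ)+1) with hv
    have hvinj : Function.Injective (MvPolynomial.aeval (R := MvPolynomial ℤ ℤ) v) := by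
      have h2 := MvPolynomial.esymmAlgHom_fin_injective (R := MvPolynomial ℤ ℤ)
        (n := p) (m := p) le_rfl
      have h3 : ⇑(MvPolynomial.aeval (R := MvPolynomial ℤ ℤ) v)
          = Subtype.val ∘ ⇑(MvPolynomial.esymmAlgHom (Fin p) (MvPolynomial ℤ ℤ) p) := by
        funext q
        exact (MvPolynomial.esymmAlgHom_apply (σ := Fin p) q).symm
      rw [h3]
      exact Subtype.val_injective.comp h2
    set XX : ℕ → MvPolynomial (Fin p) (MvPolynomial ℤ ℤ) :=
      fun m => if h : m < p then (MvPolynomial.X ⟨m, h⟩) else 1 with hXX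
    set g : Fin p → MvPolynomial (Fin p) (MvPolynomial ℤ ℤ) := fun k =>
      ∑ m ∈ Finset.range ((k:ℕ)+2),
        MvPolynomial.C (c (k:ℕ) m) * (if m = 0 then 1 else XX (m-1)) with hg
    have hXW : ∀ m : ℕ, m ≤ p →
        MvPolynomial.aeval v (if m = 0 then 1 else XX (m-1))
          = MvPolynomial.esymm (Fin p) (MvPolynomial ℤ ℤ) m := by
      intro m hm
      cases m with
      | zero => rw [if_pos rfl, map_one, MvPolynomial.esymm_zero]
      | succ m' =>
        rw [if_neg (by omega)]
        have hm' : m' < p := by omega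
        have hXXm : XX m' = MvPolynomial.X (⟨m', hm'⟩ : Fin p) := by
          simp only [hXX]; exact dif_pos hm'
        rw [show m' + 1 - 1 = m' from rfl, hXXm, MvPolynomial.aeval_X]
    have hvg : ∀ k : Fin p, MvPolynomial.aeval v (g k) = F k := by
      intro k
      rw [hg, hkey k, map_sum]
      apply Finset.sum_congr rfl
      intro m hm
      rw [Finset.mem_range] at hm
      rw [map_mul, MvPolynomial.aeval_C, MvPolynomial.algebraMap_eq,
        hXW m (by have := k.2; omega)]
    have hcomp : (MvPolynomial.aeval (R := MvPolynomial ℤ ℤ) F)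
        = (MvPolynomial.aeval v).comp (MvPolynomial.aeval g) := by
      apply MvPolynomial.algHom_ext
      intro i
      simp only [MvPolynomial.aeval_X, AlgHom.comp_apply, hvg]
    set hfun : Fin p → MvPolynomial (Fin p) (MvPolynomial ℤ ℤ) :=
      fun i : Fin p => hinv p c XX (i:ℕ) with hhf
    have hW : ∀ m : ℕ, m ≤ p →
        MvPolynomial.aeval hfun (if m = 0 then 1 else XX (m-1))
          = (if m = 0 then 1 else hinv p c XX (m-1)) := by
      intro m hm
      cases m with
      | zero => rw [if_pos rfl, if_pos rfl, map_one]
      | succ m' =>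
        rw [if_neg (by omega), if_neg (by omega)]
        have hm' : m' < p := by omega
        have hXXm : XX m' = MvPolynomial.X (⟨m', hm'⟩ : Fin p) := by
          simp only [hXX]; exact dif_pos hm'
        rw [show m' + 1 - 1 = m' from rfl, hXXm, MvPolynomial.aeval_X]
    have hinvg : ∀ k : Fin p, MvPolynomial.aeval hfun (g k) = MvPolynomial.X k := by
      intro k
      rw [hg, map_sum]
      rw [show (∑ m ∈ Finset.range ((k:ℕ)+2), MvPolynomial.aeval hfun
            (MvPolynomial.C (c (k:ℕ) m) * (if m = 0 then 1 else XX (m-1))))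
          = ∑ m ∈ Finset.range ((k:ℕ)+2),
              MvPolynomial.C (c (k:ℕ) m) * (if m = 0 then 1 else hinv p c XX (m-1)) from
        Finset.sum_congr rfl fun m hm => by
          rw [Finset.mem_range] at hm
          rw [map_mul, MvPolynomial.aeval_C, MvPolynomial.algebraMap_eq,
            hW m (by have := k.2; omega)]]
      rw [Finset.sum_range_succ]
      have hc1 : c (k:ℕ) ((k:ℕ)+1) = 1 := by rw [hc]; simp
      rw [if_neg (by omega), hc1, map_one, one_mul,
        show (k:ℕ) + 1 - 1 = (k:ℕ) from rfl, hinv_eq]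
      have hXXk : XX (k:ℕ) = MvPolynomial.X k := by
        simp only [hXX]
        rw [dif_pos k.2]
      rw [hXXk]
      ring
    have hginj : Function.Injective (MvPolynomial.aeval (R := MvPolynomial ℤ ℤ) g) := by
      have hid : (MvPolynomial.aeval hfun).comp (MvPolynomial.aeval g)
          = AlgHom.id (MvPolynomial ℤ ℤ) (MvPolynomial (Fin p) (MvPolynomial ℤ ℤ)) := by
        apply MvPolynomial.algHom_ext
        intro i
        simp only [AlgHom.comp_apply, MvPolynomial.aeval_X, hinvg, AlgHom.id_apply]
      intro u w huw
      have h5 : (MvPolynomial.aeval hfun) ((MvPolynomial.aeval g) u)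
          = (MvPolynomial.aeval hfun) ((MvPolynomial.aeval g) w) := by rw [huw]
      rwa [← AlgHom.comp_apply, ← AlgHom.comp_apply, hid, AlgHom.id_apply, AlgHom.id_apply] at h5
    rw [hcomp, AlgHom.coe_comp]
    exact hvinj.comp hginj
end
end
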